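/- arXiv:2204.10138 — 3 statements merged into one kernel-verified Lean document; each statement's English description precedes it below -/
import Mathlib

section
/- Let μ be a finite Borel measure on [a,b] with μ({b}) = 0, and assume B := ‖(dμ/dx)^{-1}‖_{L^∞([a,b])} < ∞. Then for every absolutely continuous function f on [a,b] with f(a) = 0, one has ∫_a^b |f f'| dμ ≤ B · (∫_a^b |f'| dμ)². -/
open MeasureTheory Set
open scoped ENNReal

/-- Corollary 4.4 (Opial-type inequality), case `p = 1` with a finite measure. -/
theorem opial_type_one_measure_finite
    (a b : ℝ) (hab : a < b)
    (μ : Measure ℝ) [IsFiniteMeasure μ] (hμb : μ {b} = 0)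
    (B : ℝ≥0∞)
    (hB : B = essSup (fun t => (μ.rnDeriv volume t)⁻¹) (volume.restrict (Icc a b)))
    (hBfin : B ≠ ⊤)
    (f f' : ℝ → ℝ) (hf' : IntegrableOn f' (Icc a b) volume)
    (hfa : f a = 0)
    (hf : ∀ x ∈ Icc a b, f x = ∫ t in a..x, f' t) :
    eLpNorm (fun x => f x * f' x) 1 (μ.restrict (Icc a b)) ≤
      B * eLpNorm f' 1 (μ.restrict (Icc a b)) ^ 2 := by
  have hrn : Measurable (μ.rnDeriv volume) := Measure.measurable_rnDeriv _ _
  have hfin : ∀ᵐ t ∂volume, μ.rnDeriv volume t < ⊤ := Measure.rnDeriv_lt_top μ volume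
  have hIccvol : (volume : Measure ℝ) (Icc a b) ≠ 0 := by
    simp only [Real.volume_Icc, ne_eq, ENNReal.ofReal_eq_zero, not_le]
    linarith
  -- B ≠ 0
  have hB0 : B ≠ 0 := by
    intro h0
    have hbd : ∀ᵐ t ∂(volume.restrict (Icc a b)), (μ.rnDeriv volume t)⁻¹ ≤ B := by
      rw [hB]; exact ENNReal.ae_le_essSup _
    have hinf : ∀ᵐ t ∂(volume.restrict (Icc a b)), μ.rnDeriv volume t = ⊤ := by
      filter_upwards [hbd] with t ht
      rw [h0, le_zero_iff, ENNReal.inv_eq_zero] at ht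
      exact ht
    have hfin' : ∀ᵐ t ∂(volume.restrict (Icc a b)), μ.rnDeriv volume t < ⊤ :=
      ae_restrict_of_ae hfin
    have : (volume.restrict (Icc a b) : Measure ℝ) ≠ 0 := by
      rw [Ne, Measure.restrict_eq_zero]; exact hIccvol
    have : (ae (volume.restrict (Icc a b))).NeBot := ae_neBot.mpr this
    obtain ⟨t, h1, h2⟩ := (hfin'.and hinf).exists
    exact absurd h2 h1.ne
  -- key comparison: Lebesgue integral ≤ B * μ integral on subsets of Icc a b
  have key : ∀ s : Set ℝ, MeasurableSet s → s ⊆ Icc a b →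
      ∫⁻ t in s, ‖f' t‖₊ ∂volume ≤ B * ∫⁻ t in s, ‖f' t‖₊ ∂μ := by
    intro s hs hsub
    have hbd : ∀ᵐ t ∂(volume.restrict s), (μ.rnDeriv volume t)⁻¹ ≤ B := by
      rw [hB]
      exact ae_restrict_of_ae_restrict_of_subset hsub (ENNReal.ae_le_essSup _)
    have hfin' : ∀ᵐ t ∂(volume.restrict s), μ.rnDeriv volume t < ⊤ :=
      ae_restrict_of_ae hfin
    have step1 : ∫⁻ t in s, ‖f' t‖₊ ∂volume ≤
        ∫⁻ t in s, B * (μ.rnDeriv volume t * ‖f' t‖₊) ∂volume := by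
      refine lintegral_mono_ae ?_
      filter_upwards [hbd, hfin'] with t htb htf
      have hne0 : μ.rnDeriv volume t ≠ 0 := by
        intro h0
        rw [h0, ENNReal.inv_zero] at htb
        exact hBfin (top_le_iff.mp htb)
      calc (‖f' t‖₊ : ℝ≥0∞) = ((μ.rnDeriv volume t)⁻¹ * μ.rnDeriv volume t) * ‖f' t‖₊ := by
            rw [ENNReal.inv_mul_cancel hne0 htf.ne, one_mul]
        _ ≤ (B * μ.rnDeriv volume t) * ‖f' t‖₊ := by
            gcongr
        _ = B * (μ.rnDeriv volume t * ‖f' t‖₊) := by rw [mul_assoc]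
    have step2 : ∫⁻ t in s, B * (μ.rnDeriv volume t * ‖f' t‖₊) ∂volume
        = B * ∫⁻ t in s, μ.rnDeriv volume t * ‖f' t‖₊ ∂volume :=
      lintegral_const_mul' _ _ hBfin
    have step3 : ∫⁻ t in s, μ.rnDeriv volume t * ‖f' t‖₊ ∂volume
        = ∫⁻ t in s, ‖f' t‖₊ ∂(volume.withDensity (μ.rnDeriv volume)) := by
      rw [restrict_withDensity hs,
        lintegral_withDensity_eq_lintegral_mul_non_measurable _ hrn hfin']
      rfl
    have step4 : ∫⁻ t in s, ‖f' t‖₊ ∂(volume.withDensity (μ.rnDeriv volume))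
        ≤ ∫⁻ t in s, ‖f' t‖₊ ∂μ :=
      lintegral_mono' (Measure.restrict_mono (subset_refl s)
        (μ.withDensity_rnDeriv_le volume)) le_rfl
    calc ∫⁻ t in s, ‖f' t‖₊ ∂volume
        ≤ ∫⁻ t in s, B * (μ.rnDeriv volume t * ‖f' t‖₊) ∂volume := step1
      _ = B * ∫⁻ t in s, μ.rnDeriv volume t * ‖f' t‖₊ ∂volume := step2
      _ = B * ∫⁻ t in s, ‖f' t‖₊ ∂(volume.withDensity (μ.rnDeriv volume)) := by rw [step3]
      _ ≤ B * ∫⁻ t in s, ‖f' t‖₊ ∂μ := by gcongr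
  set I : ℝ≥0∞ := ∫⁻ t in Icc a b, ‖f' t‖₊ ∂μ with hI
  -- pointwise bound on f
  have hptwise : ∀ x ∈ Icc a b, (‖f x‖₊ : ℝ≥0∞) ≤ B * I := by
    intro x hx
    rw [hf x hx, intervalIntegral.integral_of_le hx.1]
    calc (‖∫ t in Set.Ioc a x, f' t ∂volume‖₊ : ℝ≥0∞)
        ≤ ∫⁻ t in Set.Ioc a x, ‖f' t‖₊ ∂volume := enorm_integral_le_lintegral_enorm _
      _ ≤ B * ∫⁻ t in Set.Ioc a x, ‖f' t‖₊ ∂μ := by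
          exact key _ measurableSet_Ioc (fun t ht => ⟨le_of_lt ht.1, ht.2.trans hx.2⟩)
      _ ≤ B * I := by
          gcongr
          exact lintegral_mono_set (fun t ht => ⟨le_of_lt ht.1, ht.2.trans hx.2⟩)
  rw [eLpNorm_one_eq_lintegral_enorm, eLpNorm_one_eq_lintegral_enorm]
  have main : ∫⁻ x in Icc a b, ‖f x * f' x‖₊ ∂μ ≤ ∫⁻ x in Icc a b, (B * I) * ‖f' x‖₊ ∂μ := by
    refine lintegral_mono_ae ?_
    refine (ae_restrict_iff' measurableSet_Icc).2 (ae_of_all _ fun x hx => ?_)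
    rw [nnnorm_mul, ENNReal.coe_mul]
    exact mul_le_mul_left (hptwise x hx) _
  by_cases hItop : I = ⊤
  · have : B * I ^ 2 = ⊤ := by
      rw [hItop]
      rw [ENNReal.top_pow (by norm_num), ENNReal.mul_top hB0]
    rw [show B * (∫⁻ x in Icc a b, ‖f' x‖ₑ ∂μ) ^ 2 = ⊤ from this]
    exact le_top
  · calc ∫⁻ x in Icc a b, ‖f x * f' x‖₊ ∂μ
        ≤ ∫⁻ x in Icc a b, (B * I) * ‖f' x‖₊ ∂μ := main
      _ = (B * I) * ∫⁻ x in Icc a b, ‖f' x‖₊ ∂μ :=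
          lintegral_const_mul' _ _ (ENNReal.mul_ne_top hBfin hItop)
      _ = B * I ^ 2 := by rw [← hI, sq, mul_assoc]
end

section
/- Let 1 < p ≤ q < ∞ and a < b. Then for every absolutely continuous function f on [a,b] with f(a) = 0, one has ∫_a^b |f(x) f'(x)| dx ≤ ((b-a)/(1/q+(p-1)/p))^{1/q+(p-1)/p} · (q(p-1)/(p(q-1)))^{(p-1)/p} · (∫_a^b |f'|^p dx)^{1/p} · (∫_a^b |f'|^{q/(q-1)} dx)^{(q-1)/q}. -/
open MeasureTheory Set
open scoped ENNReal

/-- Key log inequality: for `0 < t` and `t + 1 ≤ q`,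
`t * (log(t+1) - log t + log(q-1) - log q) ≤ log q`. -/
lemma opial_log_ineq {t q : ℝ} (ht : 0 < t) (hq : t + 1 ≤ q) :
    t * (Real.log (t + 1) - Real.log t + Real.log (q - 1) - Real.log q) ≤ Real.log q := by
  set D : ℝ → ℝ := fun x => Real.log x + t * Real.log x - t * Real.log (x - 1) with hD
  have ht1 : (0:ℝ) < t + 1 := by linarith
  have hderiv : ∀ x, t + 1 < x →
      HasDerivAt D (1 / x + t * (1 / x) - t * (1 / (x - 1))) x := by
    intro x hx
    have hx0 : (0:ℝ) < x := by linarith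
    have hx1 : (0:ℝ) < x - 1 := by linarith
    have h1 : HasDerivAt Real.log (1 / x) x := by
      simpa [one_div] using Real.hasDerivAt_log (ne_of_gt hx0)
    have h2 : HasDerivAt (fun y : ℝ => Real.log (y - 1)) (1 / (x - 1)) x := by
      have := (Real.hasDerivAt_log (ne_of_gt hx1)).comp x ((hasDerivAt_id x).sub_const 1)
      simpa [one_div, Function.comp_def] using this
    exact (h1.add (h1.const_mul t)).sub (h2.const_mul t)
  have hmono : MonotoneOn D (Set.Ici (t + 1)) := by
    apply monotoneOn_of_deriv_nonneg (convex_Ici _)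
    · apply ContinuousOn.sub (ContinuousOn.add ?_ ?_) ?_
      · exact Real.continuousOn_log.mono (fun x hx => by
          simp only [mem_Ici] at hx; simp only [mem_compl_iff, mem_singleton_iff]
          intro h; rw [h] at hx; linarith)
      · exact (Real.continuousOn_log.mono (fun x hx => by
          simp only [mem_Ici] at hx; simp only [mem_compl_iff, mem_singleton_iff]
          intro h; rw [h] at hx; linarith)).const_smul t
      · apply ContinuousOn.const_smul ?_ t
        apply Real.continuousOn_log.comp (continuous_sub_right 1).continuousOn
        intro x hx; simp only [mem_Ici] at hx
        simp only [mem_preimage, mem_compl_iff, mem_singleton_iff]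
        intro h; have hx1 : x - 1 = 0 := h
        linarith
    · intro x hx
      rw [interior_Ici] at hx
      exact (hderiv x hx).differentiableAt.differentiableWithinAt
    · intro x hx
      rw [interior_Ici] at hx
      rw [(hderiv x hx).deriv]
      have hx0 : (0:ℝ) < x := by linarith [mem_Ioi.mp hx]
      have hx1 : (0:ℝ) < x - 1 := by linarith [mem_Ioi.mp hx]
      have hxt : t + 1 < x := mem_Ioi.mp hx
      rw [sub_nonneg, mul_one_div, mul_one_div, ← add_div, div_le_div_iff₀ hx1 hx0]
      nlinarith
  -- conclude: D q ≥ D (t+1)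
  have hDq : D (t + 1) ≤ D q := hmono (self_mem_Ici) (mem_Ici.mpr hq) hq
  have hDt1 : D (t + 1) = Real.log (t + 1) + t * Real.log (t + 1) - t * Real.log t := by
    simp only [hD, add_sub_cancel_right]
  have hlogt1 : 0 ≤ Real.log (t + 1) := Real.log_nonneg (by linarith)
  simp only [hD, add_sub_cancel_right] at hDq
  nlinarith [hDq]

/-- rpow form of the constant comparison. -/
lemma opial_rpow_ineq {t q : ℝ} (ht : 0 < t) (hq : t + 1 ≤ q) :
    (t + 1) ^ (-(1/q)) ≤ ((t + 1)/q) ^ (-((t + 1)/q)) * (t/(q - 1)) ^ (t/q) := by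
  have ht1 : (0:ℝ) < t + 1 := by linarith
  have hq0 : (0:ℝ) < q := by linarith
  have hq1 : (0:ℝ) < q - 1 := by linarith
  have hb1 : (0:ℝ) < (t + 1)/q := div_pos ht1 hq0
  have hb2 : (0:ℝ) < t/(q - 1) := div_pos ht hq1
  rw [← Real.log_le_log_iff (Real.rpow_pos_of_pos ht1 _)
    (mul_pos (Real.rpow_pos_of_pos hb1 _) (Real.rpow_pos_of_pos hb2 _)),
    Real.log_mul (ne_of_gt (Real.rpow_pos_of_pos hb1 _)) (ne_of_gt (Real.rpow_pos_of_pos hb2 _)),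
    Real.log_rpow ht1, Real.log_rpow hb1, Real.log_rpow hb2,
    Real.log_div (ne_of_gt ht1) (ne_of_gt hq0), Real.log_div (ne_of_gt ht) (ne_of_gt hq1)]
  rw [← sub_nonneg]
  have key : -((t + 1) / q) * (Real.log (t+1) - Real.log q) + t / q * (Real.log t - Real.log (q-1))
      - -(1 / q) * Real.log (t+1)
      = (Real.log q - t * (Real.log (t + 1) - Real.log t + Real.log (q - 1) - Real.log q)) / q := by
    field_simp
    ring
  rw [key]
  exact div_nonneg (by linarith [opial_log_ineq ht hq]) (le_of_lt hq0)

/-- The naive Hölder constant is bounded by the claimed constant. -/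
lemma opial_const_ineq {a b p q : ℝ} (hab : a < b) (hp : 1 < p) (hpq : p ≤ q) :
    ((b - a) ^ ((p - 1) / p * q + 1) / ((p - 1) / p * q + 1)) ^ (1/q) ≤
      ((b - a) / (1/q + (p - 1)/p)) ^ (1/q + (p - 1)/p) *
        (q * (p - 1) / (p * (q - 1))) ^ ((p - 1)/p) := by
  have hp0 : (0:ℝ) < p := by linarith
  have hq1 : (1:ℝ) < q := lt_of_lt_of_le hp hpq
  have hq0 : (0:ℝ) < q := by linarith
  set t : ℝ := (p - 1) / p * q with htdef
  have ht : 0 < t := mul_pos (div_pos (by linarith) hp0) hq0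
  have hq : t + 1 ≤ q := by
    rw [htdef]
    rw [div_mul_eq_mul_div, div_add' _ _ _ (ne_of_gt hp0), div_le_iff₀ hp0]
    nlinarith
  have hba : (0:ℝ) < b - a := by linarith
  have ht1 : (0:ℝ) < t + 1 := by linarith
  have hp' : p ≠ 0 := ne_of_gt hp0
  have hq' : q ≠ 0 := ne_of_gt hq0
  have hq1' : q - 1 ≠ 0 := by intro h; rw [sub_eq_zero] at h; linarith
  have hs : 1/q + (p - 1)/p = (t + 1)/q := by rw [htdef]; field_simp; ring
  have hc : q * (p - 1) / (p * (q - 1)) = t/(q - 1) := by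
    rw [htdef]; field_simp
  have hexp : (p - 1)/p = t/q := by rw [htdef]; field_simp
  have hL : ((b - a) ^ (t + 1) / (t + 1)) ^ (1/q)
      = (b - a) ^ ((t + 1)/q) * (t + 1) ^ (-(1/q)) := by
    rw [Real.div_rpow (Real.rpow_nonneg hba.le _) ht1.le, ← Real.rpow_mul hba.le,
      Real.rpow_neg ht1.le, div_eq_mul_inv, div_eq_mul_inv, one_mul, div_eq_mul_inv (t+1) q]
  have hR : ((b - a) / ((t + 1)/q)) ^ ((t + 1)/q)
      = (b - a) ^ ((t + 1)/q) * ((t + 1)/q) ^ (-((t + 1)/q)) := by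
    rw [Real.div_rpow hba.le (div_nonneg ht1.le hq0.le), Real.rpow_neg (div_nonneg ht1.le hq0.le),
      div_eq_mul_inv]
  rw [hs, hc, hexp, hL, hR, mul_assoc]
  exact mul_le_mul_of_nonneg_left (opial_rpow_ineq ht hq) (Real.rpow_nonneg hba.le _)


/-- Corollary 4.5 (Opial-type inequality for Lebesgue measure), case `p > 1`. -/
theorem opial_type_lebesgue_p_gt_one
    (a b p q : ℝ) (hab : a < b) (hp : 1 < p) (hpq : p ≤ q)
    (f f' : ℝ → ℝ) (hf' : IntegrableOn f' (Icc a b) volume)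
    (hfa : f a = 0)
    (hf : ∀ x ∈ Icc a b, f x = ∫ t in a..x, f' t) :
    eLpNorm (fun x => f x * f' x) 1 (volume.restrict (Icc a b)) ≤
      ENNReal.ofReal (((b - a) / (1 / q + (p - 1) / p)) ^ (1 / q + (p - 1) / p) *
          (q * (p - 1) / (p * (q - 1))) ^ ((p - 1) / p)) *
        eLpNorm f' (ENNReal.ofReal p) (volume.restrict (Icc a b)) *
        eLpNorm f' (ENNReal.ofReal (q / (q - 1))) (volume.restrict (Icc a b)) := by
  have hp0 : (0:ℝ) < p := by linarith
  have hq1 : (1:ℝ) < q := lt_of_lt_of_le hp hpq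
  have hq0 : (0:ℝ) < q := by linarith
  have hp' : p ≠ 0 := ne_of_gt hp0
  have hq' : q ≠ 0 := ne_of_gt hq0
  have hp1' : p - 1 ≠ 0 := by intro h; rw [sub_eq_zero] at h; linarith
  have hq1' : q - 1 ≠ 0 := by intro h; rw [sub_eq_zero] at h; linarith
  set α : ℝ := (p - 1) / p with hαdef
  have hα0 : 0 < α := div_pos (by linarith) hp0
  set μ := volume.restrict (Icc a b) with hμ
  have hpc : Real.HolderConjugate p (p / (p - 1)) := (Real.holderConjugate_iff_eq_conjExponent hp).mpr rfl
  have hqc : Real.HolderConjugate q (q / (q - 1)) := (Real.holderConjugate_iff_eq_conjExponent hq1).mpr rfl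
  have hq'0 : (0:ℝ) < q / (q - 1) := hqc.symm.pos
  have hm : AEMeasurable (fun x => (‖f' x‖₊ : ℝ≥0∞)) μ := hf'.aestronglyMeasurable.enorm
  set Np : ℝ≥0∞ := (∫⁻ x, (‖f' x‖₊ : ℝ≥0∞) ^ p ∂μ) ^ (1/p) with hNp
  set Nq : ℝ≥0∞ := (∫⁻ x, (‖f' x‖₊ : ℝ≥0∞) ^ (q/(q-1)) ∂μ) ^ (1/(q/(q-1))) with hNq
  -- identify the eLpNorms
  have hNpe : eLpNorm f' (ENNReal.ofReal p) μ = Np := by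
    rw [eLpNorm_eq_lintegral_rpow_enorm_toReal (by simp [hp0]) (by simp),
      ENNReal.toReal_ofReal hp0.le]
    rfl
  have hNqe : eLpNorm f' (ENNReal.ofReal (q/(q-1))) μ = Nq := by
    rw [eLpNorm_eq_lintegral_rpow_enorm_toReal (by simp [hq'0]) (by simp),
      ENNReal.toReal_ofReal hq'0.le]
    rfl
  -- Step 1: pointwise bound
  have key : ∀ x ∈ Icc a b,
      ENNReal.ofReal |f x| ≤ ENNReal.ofReal ((x - a) ^ α) * Np := by
    intro x hx
    obtain ⟨hax, hxb⟩ := hx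
    have hsub : Ioc a x ⊆ Icc a b := fun t ht => ⟨le_of_lt ht.1, le_trans ht.2 hxb⟩
    have hint : IntegrableOn f' (Ioc a x) volume := hf'.mono_set hsub
    have h1 : |f x| ≤ ∫ t in Ioc a x, |f' t| := by
      rw [hf x ⟨hax, hxb⟩, ← intervalIntegral.integral_of_le hax]
      exact intervalIntegral.abs_integral_le_integral_abs hax
    have h1' : ENNReal.ofReal |f x| ≤ ∫⁻ t in Ioc a x, (‖f' t‖₊ : ℝ≥0∞) := by
      refine le_trans (ENNReal.ofReal_le_ofReal h1) ?_
      rw [show (fun t => |f' t|) = fun t => ‖f' t‖ from funext fun t => (Real.norm_eq_abs _).symm,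
        ofReal_integral_norm_eq_lintegral_enorm hint]
      exact le_rfl
    set ν := volume.restrict (Ioc a x) with hν
    have hmν : AEMeasurable (fun t => (‖f' t‖₊ : ℝ≥0∞)) ν := hint.aestronglyMeasurable.enorm
    have hhold := ENNReal.lintegral_mul_le_Lp_mul_Lq ν hpc hmν
      (aemeasurable_const (b := (1:ℝ≥0∞)))
    simp only [Pi.mul_apply, mul_one, ENNReal.one_rpow, lintegral_one,
      Measure.restrict_apply_univ, hν, Real.volume_Ioc] at hhold
    have hinv : 1/(p/(p-1)) = α := by rw [one_div_div]
    rw [hinv] at hhold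
    have h2 : (ENNReal.ofReal (x - a)) ^ α = ENNReal.ofReal ((x - a) ^ α) := by
      rw [← ENNReal.ofReal_rpow_of_nonneg (sub_nonneg.mpr hax) hα0.le]
    have h3 : (∫⁻ t, (‖f' t‖₊ : ℝ≥0∞) ^ p ∂ν) ^ (1/p) ≤ Np := by
      rw [hNp]
      exact ENNReal.rpow_le_rpow
        (lintegral_mono' (Measure.restrict_mono hsub le_rfl) le_rfl) (by positivity)
    calc ENNReal.ofReal |f x| ≤ ∫⁻ t, (‖f' t‖₊ : ℝ≥0∞) ∂ν := h1'
      _ ≤ (∫⁻ t, (‖f' t‖₊ : ℝ≥0∞) ^ p ∂ν) ^ (1/p) * ENNReal.ofReal (x - a) ^ α := hhold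
      _ ≤ Np * ENNReal.ofReal ((x - a) ^ α) := by
          rw [h2] at *; exact mul_le_mul' h3 le_rfl
      _ = ENNReal.ofReal ((x - a) ^ α) * Np := mul_comm _ _
  rw [hNpe, hNqe]
  have hBmeas : AEMeasurable (fun x : ℝ => ENNReal.ofReal ((x - a) ^ α)) μ :=
    (ENNReal.measurable_ofReal.comp ((measurable_id.sub_const a).pow_const α)).aemeasurable
  -- Step 2
  have step2 : eLpNorm (fun x => f x * f' x) 1 μ ≤
      Np * ∫⁻ x, ENNReal.ofReal ((x - a) ^ α) * (‖f' x‖₊ : ℝ≥0∞) ∂μ := by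
    rw [eLpNorm_one_eq_lintegral_enorm]
    simp only [enorm_eq_nnnorm]
    have e1 : ∫⁻ x, (‖f x * f' x‖₊ : ℝ≥0∞) ∂μ
        = ∫⁻ x, ENNReal.ofReal |f x| * (‖f' x‖₊ : ℝ≥0∞) ∂μ := by
      refine lintegral_congr fun x => ?_
      rw [nnnorm_mul, ENNReal.coe_mul, ← enorm_eq_nnnorm (f x), ← ofReal_norm (f x), Real.norm_eq_abs]
    rw [e1]
    have e2 : ∫⁻ x, ENNReal.ofReal |f x| * (‖f' x‖₊ : ℝ≥0∞) ∂μ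
        ≤ ∫⁻ x, (ENNReal.ofReal ((x - a) ^ α) * Np) * (‖f' x‖₊ : ℝ≥0∞) ∂μ := by
      refine lintegral_mono_ae ?_
      filter_upwards [ae_restrict_mem measurableSet_Icc] with x hx
      exact mul_le_mul_left (key x hx) _
    refine le_trans e2 (le_of_eq ?_)
    rw [← lintegral_const_mul'' Np (f := fun x => ENNReal.ofReal ((x - a) ^ α) * (‖f' x‖₊ : ℝ≥0∞)) (hBmeas.mul hm)]
    exact lintegral_congr fun x => by ring
  -- Step 3: Hölder with exponents q, q/(q-1)
  have hhold2 := ENNReal.lintegral_mul_le_Lp_mul_Lq μ hqc hBmeas hm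
  simp only [Pi.mul_apply] at hhold2
  -- Step 4: compute the power integral
  have hba : (0:ℝ) < b - a := by linarith
  have hαq1 : (0:ℝ) < α * q + 1 := by have := mul_pos hα0 hq0; linarith
  have e3 : ∫⁻ x, (ENNReal.ofReal ((x - a) ^ α)) ^ q ∂μ
      = ENNReal.ofReal ((b - a) ^ (α * q + 1) / (α * q + 1)) := by
    have e3a : ∫⁻ x, (ENNReal.ofReal ((x - a) ^ α)) ^ q ∂μ
        = ∫⁻ x, ENNReal.ofReal ((x - a) ^ (α * q)) ∂μ := by
      refine lintegral_congr_ae ?_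
      filter_upwards [ae_restrict_mem measurableSet_Icc] with x hx
      rw [ENNReal.ofReal_rpow_of_nonneg (Real.rpow_nonneg (sub_nonneg.mpr hx.1) α) hq0.le,
        ← Real.rpow_mul (sub_nonneg.mpr hx.1)]
    have hcont : IntegrableOn (fun x => (x - a) ^ (α * q)) (Icc a b) volume := by
      refine ContinuousOn.integrableOn_Icc ?_
      refine ContinuousOn.rpow_const ?_ (fun x hx => Or.inr (mul_nonneg hα0.le hq0.le))
      exact (continuous_id.sub continuous_const).continuousOn
    have hnn : 0 ≤ᵐ[μ] fun x => (x - a) ^ (α * q) := by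
      filter_upwards [ae_restrict_mem measurableSet_Icc] with x hx
      exact Real.rpow_nonneg (sub_nonneg.mpr hx.1) _
    rw [e3a, ← ofReal_integral_eq_lintegral_ofReal hcont hnn]
    congr 1
    rw [integral_Icc_eq_integral_Ioc, ← intervalIntegral.integral_of_le hab.le]
    have hcomp := intervalIntegral.integral_comp_sub_right (a := a) (b := b)
      (fun u : ℝ => u ^ (α * q)) a
    rw [hcomp, sub_self, integral_rpow (Or.inl (by linarith)),
      Real.zero_rpow (by linarith), sub_zero]
  -- Combine
  have hC0 : (0:ℝ) ≤ (b - a) ^ (α * q + 1) / (α * q + 1) :=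
    div_nonneg (Real.rpow_nonneg hba.le _) hαq1.le
  calc eLpNorm (fun x => f x * f' x) 1 μ
      ≤ Np * ∫⁻ x, ENNReal.ofReal ((x - a) ^ α) * (‖f' x‖₊ : ℝ≥0∞) ∂μ := step2
    _ ≤ Np * ((ENNReal.ofReal ((b - a) ^ (α * q + 1) / (α * q + 1))) ^ (1/q) * Nq) := by
        refine mul_le_mul' le_rfl ?_
        rw [← e3]
        exact hhold2
    _ = ENNReal.ofReal (((b - a) ^ (α * q + 1) / (α * q + 1)) ^ (1/q)) * Np * Nq := by
        rw [ENNReal.ofReal_rpow_of_nonneg hC0 (by positivity)]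
        ring
    _ ≤ ENNReal.ofReal (((b - a) / (1 / q + α)) ^ (1 / q + α) *
          (q * (p - 1) / (p * (q - 1))) ^ α) * Np * Nq := by
        refine mul_le_mul_left (mul_le_mul_left (ENNReal.ofReal_le_ofReal ?_) _) _
        have hconst := opial_const_ineq (a := a) (b := b) hab hp hpq
        rw [← hαdef] at hconst
        exact hconst
end

section
/- Let 1 < p ≤ 2 and a < b. Then for every absolutely continuous function f on [a,b] with f(a) = 0, one has ∫_a^b |f(x) f'(x)| dx ≤ (p(b-a)/(2(p-1)^{1/2}))^{2(p-1)/p} · (∫_a^b |f'|^p dx)^{2/p}. -/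
open MeasureTheory Set
open scoped ENNReal

/-- Corollary 4.6 (Opial-type inequality for Lebesgue measure), case `1 < p ≤ 2`. -/
theorem opial_type_lebesgue_square
    (a b p : ℝ) (hab : a < b) (hp : 1 < p) (hp2 : p ≤ 2)
    (f f' : ℝ → ℝ) (hf' : IntegrableOn f' (Icc a b) volume)
    (hfa : f a = 0)
    (hf : ∀ x ∈ Icc a b, f x = ∫ t in a..x, f' t) :
    eLpNorm (fun x => f x * f' x) 1 (volume.restrict (Icc a b)) ≤
      ENNReal.ofReal ((p * (b - a) / (2 * (p - 1) ^ ((1 : ℝ) / 2))) ^ (2 * (p - 1) / p)) *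
        eLpNorm f' (ENNReal.ofReal p) (volume.restrict (Icc a b)) ^ (2 : ℝ) := by
  have hba : (0:ℝ) < b - a := sub_pos.mpr hab
  have hp0 : (0:ℝ) < p := by linarith
  have hp1 : (0:ℝ) < p - 1 := by linarith
  set μ := volume.restrict (Icc a b) with hμ
  set M : ℝ := ∫ t in Icc a b, |f' t| with hMdef
  have habsInt : IntegrableOn (fun t => |f' t|) (Icc a b) volume := hf'.abs
  -- pointwise bound |f x| ≤ M on Icc a b
  have habs : ∀ x ∈ Icc a b, |f x| ≤ M := by
    intro x hx
    rw [hf x hx]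
    have hax : a ≤ x := hx.1
    calc |∫ t in a..x, f' t| ≤ ∫ t in a..x, |f' t| :=
          intervalIntegral.abs_integral_le_integral_abs hax
      _ = ∫ t in Ioc a x, |f' t| := intervalIntegral.integral_of_le hax
      _ ≤ M := by
          apply setIntegral_mono_set habsInt
          · filter_upwards with t using abs_nonneg _
          · exact HasSubset.Subset.eventuallyLE (fun t ht => ⟨le_of_lt ht.1, le_trans ht.2 hx.2⟩)
  have hMnn : 0 ≤ M := integral_nonneg fun t => abs_nonneg _
  -- eLpNorm of f' at 1 equals ofReal M
  have hS1 : eLpNorm f' 1 μ = ENNReal.ofReal M := by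
    rw [eLpNorm_one_eq_lintegral_enorm, ← ofReal_integral_norm_eq_lintegral_enorm hf']
    simp [hMdef, Real.norm_eq_abs, hμ]
  -- step 1
  have h1 : eLpNorm (fun x => f x * f' x) 1 μ ≤ ENNReal.ofReal M * eLpNorm f' 1 μ := by
    rw [eLpNorm_one_eq_lintegral_enorm, eLpNorm_one_eq_lintegral_enorm,
      ← lintegral_const_mul' _ _ ENNReal.ofReal_ne_top]
    refine lintegral_mono_ae ?_
    have : ∀ᵐ x ∂μ, x ∈ Icc a b := ae_restrict_mem measurableSet_Icc
    filter_upwards [this] with x hx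
    calc ((‖f x * f' x‖₊ : ℝ≥0∞)) = (‖f x‖₊ : ℝ≥0∞) * ‖f' x‖₊ := by
          rw [nnnorm_mul]; push_cast; ring
      _ ≤ ENNReal.ofReal M * ‖f' x‖₊ := by
          apply mul_le_mul_left
          rw [← enorm_eq_nnnorm, ← ofReal_norm, Real.norm_eq_abs]
          exact ENNReal.ofReal_le_ofReal (habs x hx)
  -- Hölder step
  have hμuniv : μ Set.univ = ENNReal.ofReal (b - a) := by
    rw [hμ, Measure.restrict_apply_univ, Real.volume_Icc]
  have h2 : eLpNorm f' 1 μ ≤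
      eLpNorm f' (ENNReal.ofReal p) μ * ENNReal.ofReal (b - a) ^ (1 - 1/p) := by
    have hle : (1 : ℝ≥0∞) ≤ ENNReal.ofReal p := by
      rw [← ENNReal.ofReal_one]
      exact ENNReal.ofReal_le_ofReal hp.le
    have := eLpNorm_le_eLpNorm_mul_rpow_measure_univ (μ := μ) hle hf'.1
    rwa [hμuniv, ENNReal.toReal_one, ENNReal.toReal_ofReal hp0.le, one_div_one] at this
  set S := eLpNorm f' (ENNReal.ofReal p) μ with hS
  set V := ENNReal.ofReal (b - a) with hV
  -- constant comparison
  have hs : (0:ℝ) < (p - 1) ^ ((1:ℝ)/2) := Real.rpow_pos_of_pos hp1 _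
  have hssq : ((p - 1) ^ ((1:ℝ)/2)) ^ (2:ℕ) = p - 1 := by
    rw [← Real.rpow_natCast ((p-1) ^ ((1:ℝ)/2)) 2, ← Real.rpow_mul hp1.le]
    norm_num
  have hk : b - a ≤ p * (b - a) / (2 * (p - 1) ^ ((1:ℝ)/2)) := by
    rw [le_div_iff₀ (by positivity)]
    nlinarith [sq_nonneg ((p - 1) ^ ((1:ℝ)/2) - 1), hs]
  have hE : (0:ℝ) ≤ 2 * (p - 1) / p := by positivity
  have hconst : V ^ (2 * (p - 1) / p) ≤
      ENNReal.ofReal ((p * (b - a) / (2 * (p - 1) ^ ((1:ℝ)/2))) ^ (2 * (p - 1) / p)) := by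
    rw [← ENNReal.ofReal_rpow_of_pos (lt_of_lt_of_le hba hk)]
    exact ENNReal.rpow_le_rpow (ENNReal.ofReal_le_ofReal hk) hE
  -- combine
  have he1 : (0:ℝ) ≤ 1 - 1/p := by
    rw [sub_nonneg]
    exact (div_le_one hp0).mpr hp.le
  have hVsum : V ^ (1 - 1/p) * V ^ (1 - 1/p) = V ^ (2 * (p - 1) / p) := by
    rw [← ENNReal.rpow_add_of_nonneg _ _ he1 he1]
    congr 1
    field_simp
    ring
  have hSsq : S ^ (2:ℝ) = S * S := by
    rw [(by norm_num : (2:ℝ) = ((2:ℕ):ℝ)), ENNReal.rpow_natCast, sq]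
  calc eLpNorm (fun x => f x * f' x) 1 μ
      ≤ ENNReal.ofReal M * eLpNorm f' 1 μ := h1
    _ = eLpNorm f' 1 μ * eLpNorm f' 1 μ := by rw [hS1]
    _ ≤ (S * V ^ (1 - 1/p)) * (S * V ^ (1 - 1/p)) := mul_le_mul' h2 h2
    _ = V ^ (2 * (p - 1) / p) * (S * S) := by rw [← hVsum]; ring
    _ ≤ ENNReal.ofReal ((p * (b - a) / (2 * (p - 1) ^ ((1:ℝ)/2))) ^ (2 * (p - 1) / p)) *
        S ^ (2:ℝ) := by
        rw [hSsq]
        exact mul_le_mul_left hconst _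
end
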